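/- arXiv:2105.03220 — 2 statements merged into one kernel-verified Lean document; each statement's English description precedes it below -/
import Mathlib

section
/- Let $K, M, M_1, N_1$ be natural numbers with $K \ge 1$, $M_1 + 1 \le M$, $M + 1 \le N_1$, and suppose $N_1 - M_1$ divides $K(M - M_1)$; set $T := K(M - M_1)/(N_1 - M_1)$. Then for every natural number $k \le K$: $\binom{K}{T+1} - \binom{K-k}{T+1} < (N_1 - M)\cdot \binom{K}{T}$. Consequently, in the expected coded traffic load, the minimum $\min\left(\frac{\binom{K}{T+1} - \binom{K-k}{T+1}}{\binom{K}{T}},\; N_1 - M\right)$ always equals its first argument. -/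
/-!
Write `T = K m / d` with `m = M - M₁` and `d = N₁ - M₁`. Since `C(K, T+1) (T+1) = C(K, T) (K - T)`,
it suffices that `K - T < (d - m)(T + 1)`. Multiplying by `d` and using `T d = K m`, this reads
`K (d - m) < (d - m)(K m + d)`, which holds because `m ≥ 1` and `d > 0`.
-/

namespace Nat

theorem choose_succ_right_lt_mul_choose {K T c : ℕ} (hTK : T ≤ K) (h : K - T < c * (T + 1)) :
    K.choose (T + 1) < c * K.choose T := by
  have hpos : 0 < K.choose T := choose_pos hTK
  refine lt_of_mul_lt_mul_right (a := T + 1) ?_ (Nat.zero_le _)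
  calc K.choose (T + 1) * (T + 1) = K.choose T * (K - T) := choose_succ_right_eq K T
    _ < K.choose T * (c * (T + 1)) := Nat.mul_lt_mul_of_pos_left h hpos
    _ = c * K.choose T * (T + 1) := by ring

variable {K T m d : ℕ}

theorem le_of_mul_eq_mul_of_le (hT : T * d = K * m) (hmd : m ≤ d) (hd : 0 < d) : T ≤ K :=
  le_of_mul_le_mul_right (hT ▸ Nat.mul_le_mul_left K hmd) hd

theorem sub_lt_mul_succ_of_mul_eq_mul (hT : T * d = K * m) (hm : 0 < m) (hmd : m < d) :
    K - T < (d - m) * (T + 1) := by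
  have hTK : T ≤ K := le_of_mul_eq_mul_of_le hT hmd.le (hm.trans hmd)
  zify [hTK, hmd.le] at hT ⊢
  nlinarith

end Nat

theorem coded_min_attained_general (K M M₁ N₁ : ℕ) (hM : M₁ + 1 ≤ M)
    (hN : M + 1 ≤ N₁) (hdvd : (N₁ - M₁) ∣ K * (M - M₁)) :
    ∀ k ≤ K,
      Nat.choose K (K * (M - M₁) / (N₁ - M₁) + 1) -
          Nat.choose (K - k) (K * (M - M₁) / (N₁ - M₁) + 1) <
        (N₁ - M) * Nat.choose K (K * (M - M₁) / (N₁ - M₁)) := by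
  intro k _
  set T := K * (M - M₁) / (N₁ - M₁)
  have hT : T * (N₁ - M₁) = K * (M - M₁) := Nat.div_mul_cancel hdvd
  have hTK : T ≤ K := Nat.le_of_mul_eq_mul_of_le hT (by omega) (by omega)
  have hkey : K - T < (N₁ - M) * (T + 1) := by
    have := Nat.sub_lt_mul_succ_of_mul_eq_mul hT (by omega) (by omega)
    rwa [show N₁ - M₁ - (M - M₁) = N₁ - M by omega] at this
  calc K.choose (T + 1) - (K - k).choose (T + 1) ≤ K.choose (T + 1) := Nat.sub_le _ _
    _ < (N₁ - M) * K.choose T := Nat.choose_succ_right_lt_mul_choose hTK hkey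

/-- In the hybrid scheme with integer coded-caching parameter
`T = K (M - M₁) / (N₁ - M₁)`, for every number `k ≤ K` of nonempty coded queues, the coded
multicast load is strictly smaller than the broadcast load `N₁ - M`, i.e.
`C(K, T+1) - C(K-k, T+1) < (N₁ - M) · C(K, T)`; hence the `min` in the expected coded
traffic always equals its first argument. -/
theorem coded_min_attained (K M M₁ N₁ : ℕ) (hK : 1 ≤ K) (hM : M₁ + 1 ≤ M)
    (hN : M + 1 ≤ N₁) (hdvd : (N₁ - M₁) ∣ K * (M - M₁)) :
    ∀ k ≤ K,
      Nat.choose K (K * (M - M₁) / (N₁ - M₁) + 1) -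
          Nat.choose (K - k) (K * (M - M₁) / (N₁ - M₁) + 1) <
        (N₁ - M) * Nat.choose K (K * (M - M₁) / (N₁ - M₁)) :=
  coded_min_attained_general K M M₁ N₁ hM hN hdvd
end

section
/- For each SBS $c \in \mathrm{Fin}\, K$, let $p_c$ be a probability mass function on $\mathrm{Fin}\, N$ and let $Z_c \ge 0$ be the number of users of SBS $c$; let all users' requests be mutually independent, with each user of SBS $c$ requesting a content distributed according to $p_c$. Let $C_c \subseteq \mathrm{Fin}\, N$ be the set of contents cached (uncoded or in some coded group) at SBS $c$. Then the expected number of contents $n$ that are requested by at least one user at an SBS not caching $n$ equals $\sum_{n=1}^{N} \Big( 1 - \prod_{c \,:\, n \notin C_c} (1 - p_c(n))^{Z_c} \Big)$. (Since each such content is broadcast by the MBS exactly once, this is the expected uncoded traffic load $r_2$ of Proposition 2.) -/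
/-! By linearity of expectation the expected count is the sum over `n` of the
probability that `n` is requested at some SBS not caching it. The complementary event says that
every user of every such SBS `c` requests something other than `n`; by independence its
probability is the product of the `Z c`-th powers of `1 - p c n`. -/

open MeasureTheory
open scoped ENNReal

theorem lintegral_card_filter {Ω α : Type*} [MeasurableSpace Ω] [Fintype α] (μ : Measure Ω)
    (P : α → Ω → Prop) [∀ a ω, Decidable (P a ω)] (hP : ∀ a, MeasurableSet {ω | P a ω}) :
    ∫⁻ ω, ((Finset.univ.filter fun a => P a ω).card : ℝ≥0∞) ∂μ = ∑ a, μ {ω | P a ω} := by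
  have hcard (ω : Ω) : ((Finset.univ.filter fun a => P a ω).card : ℝ≥0∞) =
      ∑ a, {ω | P a ω}.indicator 1 ω := by
    rw [Finset.card_filter, Nat.cast_sum]
    refine Finset.sum_congr rfl fun a _ => ?_
    by_cases h : P a ω <;> simp [h]
  simp_rw [hcard]
  rw [lintegral_finsetSum _ fun a _ => measurable_one.indicator (hP a)]
  simp_rw [lintegral_indicator_one (hP _)]

theorem Finset.prod_filter_sigma_fst {κ M : Type*} {σ : κ → Type*} [Fintype κ]
    [∀ c, Fintype (σ c)] [CommMonoid M] (P : κ → Prop) [DecidablePred P] (f : κ → M) :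
    ∏ u ∈ Finset.univ.filter (fun u : Sigma σ => P u.1), f u.1 =
      ∏ c ∈ Finset.univ.filter P, f c ^ Fintype.card (σ c) := by
  rw [Finset.prod_filter, Fintype.prod_sigma, Finset.prod_filter]
  simp

theorem MeasureTheory.Measure.pi_exists_eq {ι α : Type*} [Fintype ι] [MeasurableSpace α]
    [MeasurableSingletonClass α] (μ : ι → Measure α) [∀ i, IsProbabilityMeasure (μ i)]
    (S : ι → Prop) [DecidablePred S] (a : α) :
    Measure.pi μ {g | ∃ i, S i ∧ g i = a} = 1 - ∏ i ∈ Finset.univ.filter S, (1 - μ i {a}) := by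
  have hcompl : {g : ∀ i, α | ∃ i, S i ∧ g i = a}ᶜ =
      Set.univ.pi fun i => if S i then {a}ᶜ else Set.univ := by
    ext g
    simp only [Set.mem_compl_iff, Set.mem_ofPred_eq, not_exists, not_and, Set.mem_pi,
      Set.mem_univ, true_implies]
    refine forall_congr' fun i => ?_
    split_ifs <;> simp [*]
  have hmeas : MeasurableSet {g : ∀ i, α | ∃ i, S i ∧ g i = a} := by
    rw [← compl_compl {g : ∀ i, α | ∃ i, S i ∧ g i = a}, hcompl]
    exact (MeasurableSet.univ_pi fun i => by
      split_ifs
      exacts [(measurableSet_singleton a).compl, .univ]).compl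
  rw [← compl_compl {g : ∀ i, α | ∃ i, S i ∧ g i = a}, prob_compl_eq_one_sub hmeas.compl,
    hcompl, Measure.pi_pi, Finset.prod_filter]
  congr 1
  refine Finset.prod_congr rfl fun i _ => ?_
  split_ifs
  · exact prob_compl_eq_one_sub (measurableSet_singleton a)
  · exact measure_univ

/-- SBS-dependent popularities: each SBS `c` has popularity distribution `p c` and `Z c`
users, all users' requests being mutually independent (product measure over the users
`(c, u)` with `u : Fin (Z c)`).  If `C c` is the set of contents cached at SBS `c`, then
the expected number of contents requested by at least one user at an SBS not caching them
(the expected uncoded traffic load `r₂` of Proposition 2) equals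
`∑_n (1 - ∏_{c : n ∉ C c} (1 - p c n)^{Z c})`. -/
theorem expected_uncoded_traffic_heterogeneous (K N : ℕ) (Z : Fin K → ℕ)
    (p : Fin K → PMF (Fin N)) (C : Fin K → Finset (Fin N)) :
    ∫⁻ f, ((Finset.univ.filter
            (fun n : Fin N => ∃ u : (c : Fin K) × Fin (Z c), n ∉ C u.1 ∧ f u = n)).card :
          ℝ≥0∞)
        ∂(Measure.pi (fun u : (c : Fin K) × Fin (Z c) => (p u.1).toMeasure)) =
      ∑ n : Fin N,
        (1 - ∏ c ∈ Finset.univ.filter (fun c : Fin K => n ∉ C c), (1 - p c n) ^ (Z c)) := by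
  rw [lintegral_card_filter _ _ fun n => (Set.toFinite _).measurableSet]
  refine Finset.sum_congr rfl fun n _ => ?_
  rw [Measure.pi_exists_eq]
  simp_rw [PMF.toMeasure_apply_singleton _ _ (measurableSet_singleton _)]
  rw [Finset.prod_filter_sigma_fst (fun c => n ∉ C c) (fun c => 1 - p c n)]
  simp only [Fintype.card_fin]
end
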